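/- Let M be an Hadamard manifold and X an M-valued random element with E[ρ(X,p*;β*,ξ*)] < ∞ for some (β*,ξ*,p*). Then for every β ∈ [0,1) and ξ ∈ ∂M the quantile set argmin_{p∈M} E[ρ(X,p;β,ξ)] is nonempty and compact. -/

import Mathlib

/-!
The loss `ρ(x, p) = ‖log_p x‖ + ⟪β ξ_p, log_p x⟫` differs from `d(p, x)` by at most
`|β| d(p, x)`, so one integrable loss makes every `d(p, ·)`, hence every loss, integrable, and
by dominated convergence `G(p) = E ρ(X, p)` is continuous. Integrating the triangle inequality
gives `(1 - β) d(p, q) ≤ G(p) + G(q)`: `G` is coercive and its minimisers lie in a ball around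
any point. As `M` is proper, `G` attains its minimum and the closed, bounded argmin is compact.
-/

open MeasureTheory Filter Topology
open scoped RealInnerProductSpace

theorem Continuous.argmin_nonempty_and_isCompact {M : Type*} [MetricSpace M] [ProperSpace M]
    [Nonempty M] {f : M → ℝ} (hf : Continuous f) {c : ℝ} (hc : 0 < c)
    (hdist : ∀ p q, c * dist p q ≤ f p + f q) :
    {p | ∀ q, f p ≤ f q}.Nonempty ∧ IsCompact {p | ∀ q, f p ≤ f q} := by
  obtain ⟨x₀⟩ := ‹Nonempty M›
  have hcoercive : Tendsto f (cocompact M) atTop := by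
    refine tendsto_atTop_mono (fun p => ?_) (tendsto_atTop_add_const_right _ (-f x₀)
      ((tendsto_dist_right_cocompact_atTop x₀).const_mul_atTop hc))
    linarith [hdist p x₀]
  refine ⟨hf.exists_forall_le hcoercive, Metric.isCompact_of_isClosed_isBounded ?_ ?_⟩
  · simp only [Set.ofPred_forall]
    exact isClosed_iInter fun q => isClosed_le hf continuous_const
  · refine (Metric.isBounded_iff_subset_closedBall x₀).2 ⟨2 * f x₀ / c, fun p hp => ?_⟩
    rw [Metric.mem_closedBall, le_div_iff₀' hc]
    linarith [hdist p x₀, hp x₀]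

section QuantileLoss

variable {M E Ξ : Type*} [MetricSpace M] [NormedAddCommGroup E] [InnerProductSpace ℝ E]

def quantileLoss (log : M → M → E) (dir : Ξ → M → E) (β : ℝ) (ξ : Ξ) (p x : M) : ℝ :=
  ‖log p x‖ + ⟪β • dir ξ p, log p x⟫

variable {log : M → M → E} {dir : Ξ → M → E}

theorem abs_quantileLoss_sub_dist_le (hnorm : ∀ p x : M, ‖log p x‖ = dist p x)
    (hdirunit : ∀ (ξ : Ξ) (p : M), ‖dir ξ p‖ = 1) (β : ℝ) (ξ : Ξ) (p x : M) :
    |quantileLoss log dir β ξ p x - dist p x| ≤ |β| * dist p x := by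
  calc |quantileLoss log dir β ξ p x - dist p x| = |⟪β • dir ξ p, log p x⟫| := by
        rw [quantileLoss, hnorm, add_sub_cancel_left]
    _ ≤ ‖β • dir ξ p‖ * ‖log p x‖ := abs_real_inner_le_norm _ _
    _ = |β| * dist p x := by rw [norm_smul, hdirunit, hnorm, Real.norm_eq_abs, mul_one]

theorem mul_dist_le_quantileLoss (hnorm : ∀ p x : M, ‖log p x‖ = dist p x)
    (hdirunit : ∀ (ξ : Ξ) (p : M), ‖dir ξ p‖ = 1) (β : ℝ) (ξ : Ξ) (p x : M) :
    (1 - |β|) * dist p x ≤ quantileLoss log dir β ξ p x := by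
  linarith [(abs_le.1 (abs_quantileLoss_sub_dist_le hnorm hdirunit β ξ p x)).1]

theorem abs_quantileLoss_le (hnorm : ∀ p x : M, ‖log p x‖ = dist p x)
    (hdirunit : ∀ (ξ : Ξ) (p : M), ‖dir ξ p‖ = 1) (β : ℝ) (ξ : Ξ) (p x : M) :
    |quantileLoss log dir β ξ p x| ≤ (1 + |β|) * dist p x := by
  obtain ⟨hlower, hupper⟩ := abs_le.1 (abs_quantileLoss_sub_dist_le hnorm hdirunit β ξ p x)
  have : 0 ≤ |β| * dist p x := by positivity
  rw [add_mul, one_mul]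
  exact abs_le.2 ⟨by linarith [dist_nonneg (x := p) (y := x)], by linarith⟩

theorem continuous_quantileLoss_right (hlog : ∀ p : M, Continuous (log p)) (β : ℝ) (ξ : Ξ)
    (p : M) : Continuous (quantileLoss log dir β ξ p) :=
  (hlog p).norm.add (continuous_const.inner (hlog p))

theorem continuous_quantileLoss_left (hlog : ∀ x : M, Continuous fun p => log p x)
    (hdir : ∀ ξ : Ξ, Continuous (dir ξ)) (β : ℝ) (ξ : Ξ) (x : M) :
    Continuous fun p => quantileLoss log dir β ξ p x :=
  (hlog x).norm.add (((hdir ξ).const_smul β).inner (hlog x))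

variable [MeasurableSpace M] {μ : Measure M}

theorem mul_dist_le_integral_quantileLoss_add [IsProbabilityMeasure μ]
    (hnorm : ∀ p x : M, ‖log p x‖ = dist p x) (hdirunit : ∀ (ξ : Ξ) (p : M), ‖dir ξ p‖ = 1)
    {β : ℝ} (hβ : |β| ≤ 1) {ξ : Ξ} (hint : ∀ p, Integrable (quantileLoss log dir β ξ p) μ)
    (p q : M) :
    (1 - |β|) * dist p q ≤
      (∫ x, quantileLoss log dir β ξ p x ∂μ) + ∫ x, quantileLoss log dir β ξ q x ∂μ := by
  rw [← integral_add (hint p) (hint q)]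
  calc (1 - |β|) * dist p q = ∫ _, (1 - |β|) * dist p q ∂μ := by simp
    _ ≤ ∫ x, quantileLoss log dir β ξ p x + quantileLoss log dir β ξ q x ∂μ := by
      refine integral_mono (integrable_const _) ((hint p).add (hint q)) fun x => ?_
      have htri : (1 - |β|) * dist p q ≤ (1 - |β|) * (dist p x + dist q x) :=
        mul_le_mul_of_nonneg_left (dist_triangle_right p q x) (sub_nonneg.2 hβ)
      linarith [mul_dist_le_quantileLoss hnorm hdirunit β ξ p x,
        mul_dist_le_quantileLoss hnorm hdirunit β ξ q x]

variable [OpensMeasurableSpace M]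

theorem integrable_dist_of_integrable_dist [IsFiniteMeasure μ] {x₀ : M}
    (h : Integrable (dist x₀ ·) μ) (p : M) : Integrable (dist p ·) μ :=
  ((integrable_const (dist p x₀)).add h).mono'
    (continuous_const.dist continuous_id).aestronglyMeasurable
    (Eventually.of_forall fun x => by
      rw [Real.norm_of_nonneg dist_nonneg]
      exact dist_triangle p x₀ x)

theorem integrable_dist_of_integrable_quantileLoss (hnorm : ∀ p x : M, ‖log p x‖ = dist p x)
    (hdirunit : ∀ (ξ : Ξ) (p : M), ‖dir ξ p‖ = 1) {β : ℝ} (hβ : |β| < 1) {ξ : Ξ} {p : M}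
    (h : Integrable (quantileLoss log dir β ξ p) μ) : Integrable (dist p ·) μ := by
  have hβ' : 0 < 1 - |β| := sub_pos.2 hβ
  refine (h.const_mul (1 - |β|)⁻¹).mono
    (continuous_const.dist continuous_id).aestronglyMeasurable
    (Eventually.of_forall fun x => ?_)
  have hloss := mul_dist_le_quantileLoss hnorm hdirunit β ξ p x
  have hloss_nonneg : 0 ≤ quantileLoss log dir β ξ p x := by
    linarith [mul_nonneg hβ'.le (dist_nonneg (x := p) (y := x))]
  rw [Real.norm_of_nonneg dist_nonneg,
    Real.norm_of_nonneg (mul_nonneg (inv_nonneg.2 hβ'.le) hloss_nonneg), le_inv_mul_iff₀ hβ']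
  exact hloss

theorem integrable_quantileLoss (hnorm : ∀ p x : M, ‖log p x‖ = dist p x)
    (hdirunit : ∀ (ξ : Ξ) (p : M), ‖dir ξ p‖ = 1) {p : M} (hlog : Continuous (log p))
    (hdist : Integrable (dist p ·) μ) (β : ℝ) (ξ : Ξ) :
    Integrable (quantileLoss log dir β ξ p) μ :=
  (hdist.const_mul (1 + |β|)).mono'
    (continuous_quantileLoss_right (fun _ => hlog) β ξ p).aestronglyMeasurable
    (Eventually.of_forall fun x => abs_quantileLoss_le hnorm hdirunit β ξ p x)

theorem continuous_integral_quantileLoss [IsFiniteMeasure μ]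
    (hnorm : ∀ p x : M, ‖log p x‖ = dist p x) (hdirunit : ∀ (ξ : Ξ) (p : M), ‖dir ξ p‖ = 1)
    (hlog : Continuous fun q : M × M => log q.1 q.2) (hdir : ∀ ξ : Ξ, Continuous (dir ξ))
    (hdist : ∀ p : M, Integrable (dist p ·) μ) (β : ℝ) (ξ : Ξ) :
    Continuous fun p => ∫ x, quantileLoss log dir β ξ p x ∂μ := by
  have hlog_right : ∀ p : M, Continuous (log p) := fun p => hlog.comp (Continuous.prodMk_right p)
  have hlog_left : ∀ x : M, Continuous fun p => log p x :=
    fun x => hlog.comp (Continuous.prodMk_left x)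
  refine continuous_iff_continuousAt.2 fun p₀ => continuousAt_of_dominated
    (Eventually.of_forall fun p =>
      (continuous_quantileLoss_right hlog_right β ξ p).aestronglyMeasurable)
    ?_ (((integrable_const 1).add (hdist p₀)).const_mul (1 + |β|))
    (Eventually.of_forall fun x => (continuous_quantileLoss_left hlog_left hdir β ξ x).continuousAt)
  filter_upwards [Metric.ball_mem_nhds p₀ one_pos] with p hp
  refine Eventually.of_forall fun x => (abs_quantileLoss_le hnorm hdirunit β ξ p x).trans ?_
  have hpx : dist p x ≤ 1 + dist p₀ x :=
    (dist_triangle p p₀ x).trans (by linarith [Metric.mem_ball.1 hp])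
  exact mul_le_mul_of_nonneg_left hpx (by positivity)

end QuantileLoss

/-- Let `M` be an Hadamard manifold (a proper metric space with globally
defined inverse exponential map `log`, `‖log_p x‖ = d(p,x)`, jointly continuous, and
continuous unit radial fields `dir ξ` indexed by boundary points `ξ ∈ Ξ = ∂M`) and `X` an
`M`-valued random element with law `μ` satisfying `E[ρ(X,p*;β*,ξ*)] < ∞` for some
`(β*,ξ*,p*)`.  Then for every `β ∈ [0,1)` and `ξ ∈ Ξ` the quantile set
`argmin_{p∈M} E[ρ(X,p;β,ξ)]` is nonempty and compact. -/
theorem quantile_set_nonempty_compact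
    {M : Type*} [MetricSpace M] [ProperSpace M] [MeasurableSpace M] [BorelSpace M]
    {E : Type*} [NormedAddCommGroup E] [InnerProductSpace ℝ E]
    {Ξ : Type*} (log : M → M → E) (dir : Ξ → M → E)
    (hlog : Continuous fun q : M × M => log q.1 q.2)
    (hnorm : ∀ p x : M, ‖log p x‖ = dist p x)
    (hdir : ∀ ξ : Ξ, Continuous (dir ξ))
    (hdirunit : ∀ (ξ : Ξ) (p : M), ‖dir ξ p‖ = 1)
    (μ : Measure M) [IsProbabilityMeasure μ]
    (βs : ℝ) (hβs0 : 0 ≤ βs) (hβs1 : βs < 1) (ξs : Ξ) (ps : M)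
    (hfin : Integrable (fun x => ‖log ps x‖ + ⟪βs • dir ξs ps, log ps x⟫) μ) :
    ∀ β : ℝ, 0 ≤ β → β < 1 → ∀ ξ : Ξ,
      ({p : M | ∀ q : M,
          (∫ x, (‖log p x‖ + ⟪β • dir ξ p, log p x⟫) ∂μ) ≤
            ∫ x, (‖log q x‖ + ⟪β • dir ξ q, log q x⟫) ∂μ}).Nonempty ∧
        IsCompact {p : M | ∀ q : M,
          (∫ x, (‖log p x‖ + ⟪β • dir ξ p, log p x⟫) ∂μ) ≤
            ∫ x, (‖log q x‖ + ⟪β • dir ξ q, log q x⟫) ∂μ} := by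
  intro β hβ0 hβ1 ξ
  have hβ : |β| < 1 := by rwa [abs_of_nonneg hβ0]
  have hβs : |βs| < 1 := by rwa [abs_of_nonneg hβs0]
  have hdist : ∀ p : M, Integrable (dist p ·) μ := integrable_dist_of_integrable_dist
    (integrable_dist_of_integrable_quantileLoss hnorm hdirunit hβs hfin)
  have hint : ∀ p : M, Integrable (quantileLoss log dir β ξ p) μ := fun p =>
    integrable_quantileLoss hnorm hdirunit (hlog.comp (Continuous.prodMk_right p)) (hdist p) β ξ
  have : Nonempty M := ⟨ps⟩
  exact (continuous_integral_quantileLoss hnorm hdirunit hlog hdir hdist β ξ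
    ).argmin_nonempty_and_isCompact (sub_pos.2 hβ)
    (mul_dist_le_integral_quantileLoss_add hnorm hdirunit hβ.le hint)
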